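/- arXiv:2110.08171 — 2 statements merged into one kernel-verified Lean document; each statement's English description precedes it below -/
import Mathlib

section
/- Let p : Y → X be a holomorphic covering map of complex manifolds, A a connected compact Hausdorff space, and f_k : A → X a sequence of continuous maps converging uniformly (with respect to a fixed metric on X) to a continuous map f : A → X. Suppose each f_k admits a lift g_k : A → Y with p ∘ g_k = f_k, and suppose there is a point a₀ ∈ A such that g_k(a₀) converges in Y. Then f admits a lift g : A → Y with p ∘ g = f. -/
/-!
Choose `ρ` so that over every `ρ`-ball centred on the compact set `f(A)` the covering has
continuous sections through every point, and `δ` so that every `δ`-ball centred there lies in a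
preconnected subset of the concentric `ρ / 2`-ball. If `p ∘ g` is `δ`-close to `f`, continue
`g a` along the section over `B(f a, ρ)` to a point over `f a`. Sections of a covering that
agree at one point agree on preconnected sets, so for `a'` near `a` this is the same as continuing
along the section chosen for `a`; hence the resulting lift of `f` is locally a section composed
with `f`, so it is continuous.
-/

open Metric Topology Manifold Filter Set

theorem IsLocallyInjective.eventuallyEq_of_comp {X Y A : Type*} [TopologicalSpace Y]
    [TopologicalSpace A] {p : Y → X} (hp : IsLocallyInjective p) {g₁ g₂ : A → Y} {a : A}
    (h₁ : ContinuousAt g₁ a) (h₂ : ContinuousAt g₂ a)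
    (he : ∀ᶠ a' in 𝓝 a, p (g₁ a') = p (g₂ a')) (ha : g₁ a = g₂ a) :
    g₁ =ᶠ[𝓝 a] g₂ := by
  obtain ⟨V, hV, hinj⟩ := isLocallyInjective_iff_nhds.mp hp (g₁ a)
  filter_upwards [h₁ hV, h₂ (ha ▸ hV), he] with a' h₁' h₂' he' using hinj h₁' h₂' he'

section Sections

variable {X Y : Type*} [TopologicalSpace X] [TopologicalSpace Y]

def HasSectionsOn (p : Y → X) (U : Set X) : Prop :=
  ∀ y, p y ∈ U → ∃ s : X → Y, ContinuousOn s U ∧ (∀ x ∈ U, p (s x) = x) ∧ s (p y) = y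

theorem Bundle.Trivialization.hasSectionsOn_baseSet {F : Type*} [TopologicalSpace F] {p : Y → X}
    (t : Bundle.Trivialization F p) : HasSectionsOn p t.baseSet := fun y hy =>
  ⟨t.lift y, t.continuousOn_symm_prodMk_left, fun _ hx => t.proj_lift hx, t.lift_self hy⟩

theorem IsCoveringMap.exists_mem_nhds_hasSectionsOn {p : Y → X} (hp : IsCoveringMap p) (x : X) :
    ∃ U ∈ 𝓝 x, HasSectionsOn p U := by
  -- `toTrivialization` needs a nonempty fiber; over an empty one, `p ⁻¹' U` is empty.
  cases isEmpty_or_nonempty (p ⁻¹' {x}) with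
  | inl hempty =>
    obtain ⟨-, U, hxU, hU, -, H, -⟩ := hp x
    exact ⟨U, hU.mem_nhds hxU, fun y hy => isEmptyElim (H ⟨y, hy⟩).2⟩
  | inr hne =>
    let t := (hp x).toTrivialization
    exact ⟨t.baseSet, t.open_baseSet.mem_nhds (hp x).mem_toTrivialization_baseSet,
      t.hasSectionsOn_baseSet⟩

end Sections

section Metric

variable {X Y : Type*} [PseudoMetricSpace X] [TopologicalSpace Y]

theorem IsCompact.exists_pos_forall_ball_subset_preconnected [LocallyConnectedSpace X]
    {K : Set X} (hK : IsCompact K) {r : ℝ} (hr : 0 < r) :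
    ∃ δ > 0, ∀ x ∈ K, ∃ V, IsPreconnected V ∧ ball x δ ⊆ V ∧ V ⊆ ball x r := by
  obtain ⟨δ, hδ, hcover⟩ := lebesgue_number_lemma_of_metric
    (c := fun z : K => connectedComponentIn (ball (z : X) (r / 2)) z) hK
    (fun _ => isOpen_ball.connectedComponentIn)
    fun x hx => mem_iUnion.2 ⟨⟨x, hx⟩, mem_connectedComponentIn (mem_ball_self (half_pos hr))⟩
  refine ⟨δ, hδ, fun x hx => ?_⟩
  obtain ⟨z, hz⟩ := hcover x hx
  have hsub := connectedComponentIn_subset (ball (z : X) (r / 2)) z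
  have hxz : dist x z < r / 2 := hsub (hz (mem_ball_self hδ))
  refine ⟨_, isPreconnected_connectedComponentIn, hz, hsub.trans (ball_subset_ball' ?_)⟩
  rw [dist_comm]
  linarith

theorem IsCoveringMap.exists_pos_forall_ball_subset_hasSectionsOn {p : Y → X}
    (hp : IsCoveringMap p) {K : Set X} (hK : IsCompact K) :
    ∃ ρ > 0, ∀ x ∈ K, ∃ U, HasSectionsOn p U ∧ ball x ρ ⊆ U := by
  choose U hU hsec using hp.exists_mem_nhds_hasSectionsOn
  obtain ⟨ρ, hρ, hcover⟩ := lebesgue_number_lemma_of_metric (c := fun x => interior (U x)) hK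
    (fun _ => isOpen_interior) (fun x _ => mem_iUnion.2 ⟨x, mem_interior_iff_mem_nhds.2 (hU x)⟩)
  refine ⟨ρ, hρ, fun x hx => ?_⟩
  obtain ⟨z, hz⟩ := hcover x hx
  exact ⟨U z, hsec z, hz.trans interior_subset⟩

theorem IsCoveringMap.exists_pos_lift_of_forall_dist_lt [LocallyConnectedSpace X] {A : Type*}
    [TopologicalSpace A] {p : Y → X} (hp : IsCoveringMap p) {f : A → X} (hf : Continuous f)
    (hK : IsCompact (range f)) :
    ∃ ε > 0, ∀ g : A → Y, Continuous g → (∀ a, dist (p (g a)) (f a) < ε) →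
      ∃ gl : A → Y, Continuous gl ∧ ∀ a, p (gl a) = f a := by
  obtain ⟨ρ, hρ, hU⟩ := hp.exists_pos_forall_ball_subset_hasSectionsOn hK
  obtain ⟨δ, hδ, hV⟩ := hK.exists_pos_forall_ball_subset_preconnected (half_pos hρ)
  refine ⟨δ, hδ, fun g hg hclose => ?_⟩
  choose U hUsec hUball using fun a => hU (f a) (mem_range_self a)
  choose V hVconn hVball hVsub using fun a => hV (f a) (mem_range_self a)
  have hpg : ∀ a, p (g a) ∈ ball (f a) ρ := fun a =>
    ball_subset_ball (half_le_self hρ.le) (hVsub a (hVball a (hclose a)))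
  choose s hs hps hsg using fun a => hUsec a (g a) (hUball a (hpg a))
  have hsAt : ∀ a, ∀ x ∈ ball (f a) ρ, ContinuousAt (s a) x := fun a x hx =>
    (hs a).continuousAt (mem_of_superset (isOpen_ball.mem_nhds hx) (hUball a))
  refine ⟨fun a => s a (f a), continuous_iff_continuousAt.2 fun a => ?_,
    fun a => hps a _ (hUball a (mem_ball_self hρ))⟩
  have hpgAt : ContinuousAt (fun a' => p (g a')) a := (hp.continuous.comp hg).continuousAt
  have hsheet : ∀ᶠ a' in 𝓝 a, s a (p (g a')) = g a' := by
    refine hp.isLocalHomeomorph.isLocallyInjective.eventuallyEq_of_comp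
      ((hsAt a _ (hpg a)).comp (f := fun a' => p (g a')) hpgAt) hg.continuousAt ?_ (hsg a)
    filter_upwards [hpgAt.preimage_mem_nhds (isOpen_ball.mem_nhds (hpg a))] with a' ha'
    exact hps a _ (hUball a ha')
  have hf_near : ∀ᶠ a' in 𝓝 a, f a' ∈ ball (f a) (ρ / 2) :=
    hf.continuousAt (ball_mem_nhds _ (half_pos hρ))
  have hlocal : (fun a' => s a' (f a')) =ᶠ[𝓝 a] s a ∘ f := by
    filter_upwards [hsheet, hf_near] with a' hsheet' hf'
    have hVa' : V a' ⊆ U a' :=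
      (hVsub a').trans ((ball_subset_ball (half_le_self hρ.le)).trans (hUball a'))
    have hVa : V a' ⊆ U a := (hVsub a').trans ((ball_subset_ball' (by
      rw [mem_ball] at hf'; linarith)).trans (hUball a))
    exact hp.eqOn_of_comp_eqOn (hVconn a') ((hs a').mono hVa') ((hs a).mono hVa)
      (fun x hx => by simp only [Function.comp_apply, hps a' x (hVa' hx), hps a x (hVa hx)])
      (hVball a' (hclose a')) (by rw [hsg, hsheet']) (hVball a' (mem_ball_self hδ))
  exact ((hsAt a _ (mem_ball_self hρ)).comp hf.continuousAt).congr hlocal.symm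

end Metric

theorem lift_of_uniform_limit_general
    {E : Type*} [NormedAddCommGroup E] [NormedSpace ℂ E]
    {X Y : Type*} [MetricSpace X] [ChartedSpace E X]
    [TopologicalSpace Y]
    (p : Y → X) (hp : IsCoveringMap p)
    {A : Type*} [TopologicalSpace A] [CompactSpace A]
    (f : A → X) (hf : Continuous f)
    (fk : ℕ → A → X)
    (hconv : TendstoUniformly fk f atTop)
    (g : ℕ → A → Y) (hg : ∀ k, Continuous (g k)) (hgl : ∀ k a, p (g k a) = fk k a) :
    ∃ gl : A → Y, Continuous gl ∧ ∀ a, p (gl a) = f a := by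
  have := ChartedSpace.locallyConnectedSpace E X
  obtain ⟨ε, hε, hlift⟩ := hp.exists_pos_lift_of_forall_dist_lt hf (isCompact_range hf)
  obtain ⟨k, hk⟩ := (Metric.tendstoUniformly_iff.1 hconv ε hε).exists
  exact hlift (g k) (hg k) fun a => by rw [hgl, dist_comm]; exact hk a

/-- Uniform limits of liftable maps through a holomorphic covering map of complex
manifolds are liftable, given convergence of the lifts at one basepoint. -/
theorem lift_of_uniform_limit
    {E F : Type*} [NormedAddCommGroup E] [NormedSpace ℂ E]
    [NormedAddCommGroup F] [NormedSpace ℂ F]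
    {X Y : Type*} [MetricSpace X] [ChartedSpace E X]
    [TopologicalSpace Y] [ChartedSpace F Y]
    (p : Y → X) (hp : IsCoveringMap p) (hholo : MDifferentiable 𝓘(ℂ, F) 𝓘(ℂ, E) p)
    {A : Type*} [TopologicalSpace A] [ConnectedSpace A] [CompactSpace A] [T2Space A]
    (f : A → X) (hf : Continuous f)
    (fk : ℕ → A → X) (hfk : ∀ k, Continuous (fk k))
    (hconv : TendstoUniformly fk f atTop)
    (g : ℕ → A → Y) (hg : ∀ k, Continuous (g k)) (hgl : ∀ k a, p (g k a) = fk k a)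
    (a₀ : A) (y₀ : Y) (hy : Tendsto (fun k => g k a₀) atTop (𝓝 y₀)) :
    ∃ gl : A → Y, Continuous gl ∧ ∀ a, p (gl a) = f a :=
  lift_of_uniform_limit_general (E := E) p hp f hf fk hconv g hg hgl
end

section
/- Let p : S' → S be a covering map of Riemann surfaces (no branching), A a connected, locally connected compact metric space, a₀ ∈ A, and f, f_k : A → S continuous with f_k → f uniformly. If each f_k lifts to f'_k : A → S' and f'_k(a₀) = y₀ for a fixed y₀ ∈ S' for all k, then f lifts to f' : A → S' with f'(a₀) = y₀. -/
open Metric Topology Manifold Filter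

noncomputable section

/-! If `p ∘ u` is uniformly close to `f`, moving `u a` along its sheet to the point over `f a`
lifts `f`. Taking the distance small compared with a Lebesgue number of a cover of the compact set
`f(A)` by trivializing neighbourhoods, and with the uniform local connectedness of the base on
`f(A)`, all points involved near `f b` lie in one preconnected set inside the relevant trivializing
neighbourhoods. Uniqueness of lifts over preconnected sets then shows that near each `b` the lift is
transport along the sheets of a single trivialization, hence continuous. Uniform convergence
provides such a `u = f'ₖ`; since `fₖ a₀ = p y₀` for all `k`, also `f a₀ = p y₀`, so the lift takes
the value `y₀` at `a₀`. -/

namespace Bundle.Trivialization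

variable {E X F : Type*} [TopologicalSpace E] [TopologicalSpace X] [TopologicalSpace F]
  {p : E → X} (t : Trivialization F p)

def sheetLift (y : E) (x : X) : E :=
  t.toOpenPartialHomeomorph.symm (x, (t y).2)

variable {t}

theorem proj_sheetLift (y : E) {x : X} (hx : x ∈ t.baseSet) : p (t.sheetLift y x) = x :=
  t.proj_symm_apply' hx

theorem sheetLift_proj {y : E} (hy : y ∈ t.source) : t.sheetLift y (p y) = y :=
  t.symm_apply_mk_proj hy

variable (t) in
theorem continuousOn_sheetLift :
    ContinuousOn (fun q : E × X ↦ t.sheetLift q.1 q.2) (t.source ×ˢ t.baseSet) := by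
  refine t.toOpenPartialHomeomorph.continuousOn_symm.comp
    (continuousOn_snd.prodMk (continuous_snd.comp_continuousOn
      (t.continuousOn_toFun.comp continuousOn_fst fun q hq ↦ hq.1))) ?_
  exact fun q hq ↦ t.mem_target.mpr hq.2

theorem _root_.ContinuousAt.sheetLift {A : Type*} [TopologicalSpace A] {u : A → E} {f : A → X}
    {b : A} (hu : ContinuousAt u b) (hf : ContinuousAt f b) (hub : u b ∈ t.source)
    (hfb : f b ∈ t.baseSet) : ContinuousAt (fun a ↦ t.sheetLift (u a) (f a)) b :=
  (t.continuousOn_sheetLift.continuousAt (prod_mem_nhds (t.open_source.mem_nhds hub)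
    (t.open_baseSet.mem_nhds hfb))).comp (f := fun a ↦ (u a, f a)) (hu.prodMk hf)

variable (t) in
theorem continuousOn_sheetLift_right (y : E) : ContinuousOn (t.sheetLift y) t.baseSet :=
  t.continuousOn_symm_prodMk_left

end Bundle.Trivialization

theorem exists_ball_subset_isPreconnected_subset_ball {X : Type*} [PseudoMetricSpace X]
    [LocallyConnectedSpace X] {K : Set X} (hK : IsCompact K) {ε : ℝ} (hε : 0 < ε) :
    ∃ δ > 0, ∀ x ∈ K, ∃ D, IsPreconnected D ∧ ball x δ ⊆ D ∧ D ⊆ ball x ε := by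
  obtain ⟨δ, hδ, hcover⟩ := lebesgue_number_lemma_of_metric hK
    (c := fun y ↦ connectedComponentIn (ball y (ε / 2)) y)
    (fun y ↦ isOpen_ball.connectedComponentIn)
    (fun x _ ↦ Set.mem_iUnion.mpr ⟨x, mem_connectedComponentIn (mem_ball_self (by positivity))⟩)
  refine ⟨δ, hδ, fun x hx ↦ ?_⟩
  obtain ⟨y, hxy⟩ := hcover x hx
  have hsub : connectedComponentIn (ball y (ε / 2)) y ⊆ ball y (ε / 2) :=
    connectedComponentIn_subset _ _
  have hyx : dist x y < ε / 2 := hsub (hxy (mem_ball_self hδ))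
  refine ⟨_, isPreconnected_connectedComponentIn, hxy, hsub.trans (ball_subset_ball' ?_)⟩
  rw [dist_comm]; linarith

namespace IsCoveringMap

variable {E : Type*} [TopologicalSpace E]

section

variable {X : Type*} [TopologicalSpace X] {p : E → X}

theorem isClosed_range (hp : IsCoveringMap p) : IsClosed (Set.range p) := by
  refine isOpen_compl_iff.mp (isOpen_iff_mem_nhds.mpr fun x hx ↦ ?_)
  obtain ⟨-, U, hxU, hU, -, H, hH⟩ := hp x
  refine Filter.mem_of_superset (hU.mem_nhds hxU) ?_
  rintro _ hz ⟨e, rfl⟩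
  exact hx ⟨H.symm (⟨x, hxU⟩, (H ⟨e, hz⟩).2), by simpa using (hH (H.symm (⟨x, hxU⟩, _))).symm⟩

theorem sheetLift_eq_of_isPreconnected (hp : IsCoveringMap p) {F F' : Type*} [TopologicalSpace F]
    [TopologicalSpace F'] {t : Bundle.Trivialization F p} {t' : Bundle.Trivialization F' p}
    {D : Set X} (hD : IsPreconnected D) (ht : D ⊆ t.baseSet) (ht' : D ⊆ t'.baseSet)
    {y : E} (hy : p y ∈ D) {x : X} (hx : x ∈ D) : t.sheetLift y x = t'.sheetLift y x := by
  have hsrc : y ∈ t.source := t.mem_source.mpr (ht hy)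
  have hsrc' : y ∈ t'.source := t'.mem_source.mpr (ht' hy)
  refine hp.eqOn_of_comp_eqOn hD (t.continuousOn_sheetLift_right y |>.mono ht)
    (t'.continuousOn_sheetLift_right y |>.mono ht') (fun z hz ↦ ?_) hy ?_ hx
  · simp only [Function.comp_apply, t.proj_sheetLift y (ht hz), t'.proj_sheetLift y (ht' hz)]
  · rw [Bundle.Trivialization.sheetLift_proj hsrc, Bundle.Trivialization.sheetLift_proj hsrc']

end

theorem exists_lift_of_forall_dist_lt {X A : Type*} [PseudoMetricSpace X]
    [LocallyConnectedSpace X] [TopologicalSpace A] {p : E → X} (hp : IsCoveringMap p)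
    {f : A → X} (hf : Continuous f) (hK : IsCompact (Set.range f))
    (hfp : Set.range f ⊆ Set.range p) :
    ∃ δ > 0, ∀ u : A → E, Continuous u → (∀ a, dist (p (u a)) (f a) < δ) →
      ∃ g : A → E, Continuous g ∧ (∀ a, p (g a) = f a) ∧ ∀ a, p (u a) = f a → g a = u a := by
  choose e he using fun a ↦ hfp ⟨a, rfl⟩
  have (a : A) : Nonempty (p ⁻¹' {p (e a)}) := ⟨⟨e a, rfl⟩⟩
  let t a := (hp (p (e a))).toTrivialization
  have hbase a : f a ∈ (t a).baseSet := he a ▸ (hp _).mem_toTrivialization_baseSet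
  obtain ⟨δ₁, hδ₁, hcover⟩ := lebesgue_number_lemma_of_metric hK (fun a ↦ (t a).open_baseSet)
    (by rintro _ ⟨a, rfl⟩; exact Set.mem_iUnion.mpr ⟨a, hbase a⟩)
  obtain ⟨δ₂, hδ₂, hconn⟩ := exists_ball_subset_isPreconnected_subset_ball hK (half_pos hδ₁)
  refine ⟨min (δ₁ / 2) (δ₂ / 2), by positivity, fun u hu hclose ↦ ?_⟩
  choose c hc using fun a ↦ hcover (f a) ⟨a, rfl⟩
  have hsrc a : u a ∈ (t (c a)).source := (t (c a)).mem_source.mpr <| hc a <| mem_ball.mpr <|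
    (hclose a).trans_le <| (min_le_left _ _).trans (half_le_self hδ₁.le)
  refine ⟨fun a ↦ (t (c a)).sheetLift (u a) (f a), ?_,
    fun a ↦ (t (c a)).proj_sheetLift _ (hc a (mem_ball_self hδ₁)), fun a ha ↦ ?_⟩
  · refine continuous_iff_continuousAt.mpr fun b ↦ ?_
    obtain ⟨D, hD, hballD, hDball⟩ := hconn (f b) ⟨b, rfl⟩
    have hDb : D ⊆ (t (c b)).baseSet := hDball.trans ((ball_subset_ball (by linarith)).trans (hc b))
    have hnear : ∀ᶠ a in 𝓝 b, f a ∈ D ∧ p (u a) ∈ D ∧ D ⊆ (t (c a)).baseSet := by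
      filter_upwards [hf.continuousAt.preimage_mem_nhds (ball_mem_nhds (f b)
        (show 0 < min (δ₁ / 2) (δ₂ / 2) by positivity))] with a ha
      have hfab : dist (f a) (f b) < min (δ₁ / 2) (δ₂ / 2) := ha
      have := (hclose a).trans_le (min_le_right _ _)
      have := hfab.trans_le (min_le_right _ _)
      have := hfab.trans_le (min_le_left _ _)
      refine ⟨hballD (mem_ball.mpr (by linarith)),
        hballD (mem_ball.mpr (by linarith [dist_triangle (p (u a)) (f a) (f b)])),
        hDball.trans ((ball_subset_ball' (by linarith [dist_comm (f a) (f b)])).trans (hc a))⟩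
    refine (hu.continuousAt.sheetLift hf.continuousAt (hsrc b) (hc b (mem_ball_self hδ₁))).congr
      (hnear.mono fun a ⟨hfa, hua, hDa⟩ ↦ ?_)
    exact hp.sheetLift_eq_of_isPreconnected hD hDb hDa hua hfa
  · dsimp only
    rw [← ha]; exact Bundle.Trivialization.sheetLift_proj (hsrc a)

end IsCoveringMap

theorem lift_of_uniform_limit_with_basepoint_general
    {S S' : Type*} [MetricSpace S] [ChartedSpace ℂ S]
    [TopologicalSpace S']
    (p : S' → S) (hp : IsCoveringMap p)
    {A : Type*} [MetricSpace A] [CompactSpace A]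
    (a₀ : A) (y₀ : S')
    (f : A → S) (hf : Continuous f)
    (fk : ℕ → A → S)
    (hconv : TendstoUniformly fk f atTop)
    (f' : ℕ → A → S') (hf' : ∀ k, Continuous (f' k))
    (hfl : ∀ k a, p (f' k a) = fk k a) (hbase : ∀ k, f' k a₀ = y₀) :
    ∃ g : A → S', Continuous g ∧ (∀ a, p (g a) = f a) ∧ g a₀ = y₀ := by
  have := ChartedSpace.locallyConnectedSpace ℂ S
  have hfp : Set.range f ⊆ Set.range p := by
    rintro _ ⟨a, rfl⟩
    exact hp.isClosed_range.mem_of_tendsto (hconv.tendsto_at a)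
      (Eventually.of_forall fun k ↦ ⟨f' k a, hfl k a⟩)
  have hfa₀ : p y₀ = f a₀ := by
    refine tendsto_const_nhds_iff.mp ((hconv.tendsto_at a₀).congr fun k ↦ ?_)
    rw [← hfl, hbase]
  obtain ⟨δ, hδ, hlift⟩ := hp.exists_lift_of_forall_dist_lt hf (isCompact_range hf) hfp
  obtain ⟨k, hk⟩ := (Metric.tendstoUniformly_iff.mp hconv δ hδ).exists
  obtain ⟨g, hg, hpg, hgu⟩ := hlift (f' k) (hf' k) fun a ↦ by rw [hfl, dist_comm]; exact hk a
  exact ⟨g, hg, hpg, (hgu a₀ (by rw [hbase, hfa₀])).trans (hbase k)⟩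

/-- Convergence of lifts: a uniform limit of maps liftable through a covering map of
Riemann surfaces, with lifts all taking the value `y₀` at `a₀`, is itself liftable with
the same basepoint value. -/
theorem lift_of_uniform_limit_with_basepoint
    {S S' : Type*} [MetricSpace S] [ChartedSpace ℂ S]
    [TopologicalSpace S'] [ChartedSpace ℂ S']
    (p : S' → S) (hp : IsCoveringMap p) (hholo : MDifferentiable 𝓘(ℂ) 𝓘(ℂ) p)
    {A : Type*} [MetricSpace A] [CompactSpace A] [ConnectedSpace A]
    [LocallyConnectedSpace A]
    (a₀ : A) (y₀ : S')
    (f : A → S) (hf : Continuous f)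
    (fk : ℕ → A → S) (hfk : ∀ k, Continuous (fk k))
    (hconv : TendstoUniformly fk f atTop)
    (f' : ℕ → A → S') (hf' : ∀ k, Continuous (f' k))
    (hfl : ∀ k a, p (f' k a) = fk k a) (hbase : ∀ k, f' k a₀ = y₀) :
    ∃ g : A → S', Continuous g ∧ (∀ a, p (g a) = f a) ∧ g a₀ = y₀ :=
  lift_of_uniform_limit_with_basepoint_general p hp a₀ y₀ f hf fk hconv f' hf' hfl hbase
end
end
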